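/- arXiv:1105.0245 — 4 statements merged into one kernel-verified Lean document; each statement's English description precedes it below -/
import Mathlib

section
/- For every natural number n, every associative unital algebra R over the complex numbers (not assumed commutative), and all elements a, b of R satisfying 2ab = a² + b² + 1, one has a·bⁿ = A_n(a) + C_n(b), where A_n(a) and C_n(b) denote the evaluations of the polynomials A_n and C_n at a and b via the algebra structure map. -/
open Polynomial Finset

/-- The pair of polynomial sequences (Aₙ, Cₙ) from the paper:
A₀ = X, C₀ = 0, and
A_{n+1} = ((n+1)/(n+2))·(X·Aₙ + ∑_{k=0}^{n} λₙᵏ·A_k),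
C_{n+1} = ((n+1)/(n+2))·((X²+1)·Xⁿ + ∑_{k=0}^{n} λₙᵏ·C_k),
where λₙᵏ is the coefficient of Xᵏ in Cₙ. -/
noncomputable def AC : ℕ → Polynomial ℂ × Polynomial ℂ
  | 0 => (Polynomial.X, 0)
  | (n+1) =>
    (((n+1 : ℂ)/(n+2)) • (Polynomial.X * (AC n).1 +
        ∑ k ∈ (Finset.range (n+1)).attach, ((AC n).2.coeff k) • (AC k).1),
     ((n+1 : ℂ)/(n+2)) • ((Polynomial.X^2 + 1) * Polynomial.X^n +
        ∑ k ∈ (Finset.range (n+1)).attach, ((AC n).2.coeff k) • (AC k).2))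
  decreasing_by
  all_goals first
    | exact Nat.lt_succ_self n
    | exact Nat.lt_succ_of_lt (Finset.mem_range.mp k.2)
    | exact Finset.mem_range.mp k.2

noncomputable def polyA (n : ℕ) : Polynomial ℂ := (AC n).1
noncomputable def polyC (n : ℕ) : Polynomial ℂ := (AC n).2

lemma polyA_succ (n : ℕ) : polyA (n+1) = ((n+1 : ℂ)/(n+2)) • (Polynomial.X * (polyA n) +
        ∑ k ∈ Finset.range (n+1), ((polyC n).coeff k) • (polyA k)) := by
  rw [polyA, AC]
  rw [Finset.sum_attach (Finset.range (n+1)) (fun k => ((AC n).2.coeff k) • (AC k).1)]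
  rfl

lemma polyC_succ (n : ℕ) : polyC (n+1) = ((n+1 : ℂ)/(n+2)) • ((Polynomial.X^2 + 1) * Polynomial.X^n +
        ∑ k ∈ Finset.range (n+1), ((polyC n).coeff k) • (polyC k)) := by
  rw [polyC, AC]
  rw [Finset.sum_attach (Finset.range (n+1)) (fun k => ((AC n).2.coeff k) • (AC k).2)]
  rfl

lemma degC : ∀ n, (polyC n).natDegree ≤ n + 1 := by
  intro n
  induction n using Nat.strong_induction_on with
  | _ n ih =>
    match n with
    | 0 => simp [polyC, AC]
    | (m+1) =>
      rw [polyC_succ]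
      refine le_trans (natDegree_smul_le _ _) (le_trans (natDegree_add_le _ _) ?_)
      refine max_le (le_trans (natDegree_mul_le) ?_) ?_
      · have h1 : (Polynomial.X ^ 2 + 1 : Polynomial ℂ).natDegree ≤ 2 :=
          le_trans (natDegree_add_le _ _) (by simp)
        have h2 : ((Polynomial.X : Polynomial ℂ) ^ m).natDegree ≤ m := by simp
        omega
      · refine le_trans (natDegree_sum_le _ _) ?_
        rw [Finset.fold_max_le]
        refine ⟨by omega, fun k hk => le_trans (natDegree_smul_le _ _) ?_⟩
        have h1 := Finset.mem_range.mp hk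
        have h2 := ih k h1
        omega

lemma coeffC_top (n : ℕ) : (polyC n).coeff (n+1) = (n : ℂ)/(n+1) := by
  match n with
  | 0 => simp [polyC, AC]
  | (m+1) =>
    rw [polyC_succ]
    rw [Polynomial.coeff_smul, Polynomial.coeff_add, Polynomial.finset_sum_coeff]
    have hsum : ∑ k ∈ Finset.range (m+1), ((polyC m).coeff k • polyC k).coeff (m+1+1) = 0 := by
      refine Finset.sum_eq_zero fun k hk => ?_
      rw [Polynomial.coeff_smul]
      have h1 := Finset.mem_range.mp hk
      have h2 := degC k
      rw [Polynomial.coeff_eq_zero_of_natDegree_lt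
        (show (polyC k).natDegree < m+1+1 by omega), smul_zero]
    rw [hsum, add_zero]
    have hc : ((Polynomial.X^2 + 1 : Polynomial ℂ) * Polynomial.X^m).coeff (m+1+1) = 1 := by
      rw [add_mul, one_mul, ← pow_add, Polynomial.coeff_add, Polynomial.coeff_X_pow,
        Polynomial.coeff_X_pow]
      rw [if_pos (by omega), if_neg (by omega), add_zero]
    rw [hc, smul_eq_mul, mul_one]
    push_cast
    ring

theorem stmt0 (n : ℕ) (R : Type*) [Ring R] [Algebra ℂ R] (a b : R)
    (h : 2 * (a * b) = a ^ 2 + b ^ 2 + 1) :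
    a * b ^ n = Polynomial.aeval a (polyA n) + Polynomial.aeval b (polyC n) := by
  induction n using Nat.strong_induction_on with
  | _ n ih =>
    match n with
    | 0 => simp [polyA, polyC, AC]
    | (m+1) =>
      have hm1 : ((m:ℂ)+1) ≠ 0 := by
        have : ((m+1:ℕ):ℂ) ≠ 0 := Nat.cast_ne_zero.mpr (by omega)
        push_cast at this; exact this
      have hm2 : ((m:ℂ)+2) ≠ 0 := by
        have : ((m+2:ℕ):ℂ) ≠ 0 := Nat.cast_ne_zero.mpr (by omega)
        push_cast at this; exact this
      set z : R := a * b ^ (m+1) with hz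
      rw [polyA_succ, polyC_succ, map_smul, map_smul, ← smul_add]
      have e1 : Polynomial.aeval a (Polynomial.X * polyA m +
          ∑ k ∈ Finset.range (m+1), ((polyC m).coeff k) • (polyA k)) =
          a * Polynomial.aeval a (polyA m) +
          ∑ k ∈ Finset.range (m+1), ((polyC m).coeff k) • Polynomial.aeval a (polyA k) := by
        simp [map_sum]
      have e2 : Polynomial.aeval b ((Polynomial.X^2 + 1) * Polynomial.X^m +
          ∑ k ∈ Finset.range (m+1), ((polyC m).coeff k) • (polyC k)) =
          (b^2 + 1) * b^m +
          ∑ k ∈ Finset.range (m+1), ((polyC m).coeff k) • Polynomial.aeval b (polyC k) := by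
        simp [map_sum]
      rw [e1, e2]
      have hsum : ∑ k ∈ Finset.range (m+1), ((polyC m).coeff k) • Polynomial.aeval a (polyA k)
          + ∑ k ∈ Finset.range (m+1), ((polyC m).coeff k) • Polynomial.aeval b (polyC k)
          = a * Polynomial.aeval b (polyC m) - ((m:ℂ)/((m:ℂ)+1)) • z := by
        rw [← Finset.sum_add_distrib]
        have hterm : ∀ k ∈ Finset.range (m+1),
            ((polyC m).coeff k) • Polynomial.aeval a (polyA k)
              + ((polyC m).coeff k) • Polynomial.aeval b (polyC k)
            = a * (((polyC m).coeff k) • b^k) := by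
          intro k hk
          rw [← smul_add, ← ih k (Finset.mem_range.mp hk), mul_smul_comm]
        rw [Finset.sum_congr rfl hterm, ← Finset.mul_sum]
        have hexp : Polynomial.aeval b (polyC m)
            = ∑ k ∈ Finset.range (m+2), ((polyC m).coeff k) • b^k :=
          Polynomial.aeval_eq_sum_range' (lt_of_le_of_lt (degC m) (Nat.lt_succ_self _)) b
        rw [hexp, Finset.sum_range_succ (fun k => ((polyC m).coeff k) • b^k) (m+1),
          coeffC_top, mul_add, mul_smul_comm]
        abel
      have key : a * Polynomial.aeval a (polyA m) +
            ∑ k ∈ Finset.range (m+1), ((polyC m).coeff k) • Polynomial.aeval a (polyA k)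
          + ((b^2 + 1) * b^m +
            ∑ k ∈ Finset.range (m+1), ((polyC m).coeff k) • Polynomial.aeval b (polyC k))
          = (((m:ℂ)+2)/((m:ℂ)+1)) • z := by
        have rearr : a * Polynomial.aeval a (polyA m) +
            ∑ k ∈ Finset.range (m+1), ((polyC m).coeff k) • Polynomial.aeval a (polyA k)
          + ((b^2 + 1) * b^m +
            ∑ k ∈ Finset.range (m+1), ((polyC m).coeff k) • Polynomial.aeval b (polyC k))
          = a * Polynomial.aeval a (polyA m) + (b^2+1)*b^m +
            (∑ k ∈ Finset.range (m+1), ((polyC m).coeff k) • Polynomial.aeval a (polyA k)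
            + ∑ k ∈ Finset.range (m+1), ((polyC m).coeff k) • Polynomial.aeval b (polyC k)) := by
          abel
        rw [rearr, hsum]
        have hmain : a * Polynomial.aeval a (polyA m) + (b^2+1)*b^m
            + a * Polynomial.aeval b (polyC m) = z + z := by
          have : a * Polynomial.aeval a (polyA m) + a * Polynomial.aeval b (polyC m)
              = a * (a * b^m) := by rw [← mul_add, ← ih m (by omega)]
          calc a * Polynomial.aeval a (polyA m) + (b^2+1)*b^m
              + a * Polynomial.aeval b (polyC m)
              = a * (a * b^m) + (b^2+1)*b^m := by rw [← this]; abel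
            _ = (a^2 + b^2 + 1) * b^m := by noncomm_ring
            _ = (2 * (a*b)) * b^m := by rw [h]
            _ = z + z := by rw [hz, pow_succ']; noncomm_ring
        calc a * Polynomial.aeval a (polyA m) + (b^2+1)*b^m +
            (a * Polynomial.aeval b (polyC m) - ((m:ℂ)/((m:ℂ)+1)) • z)
            = (a * Polynomial.aeval a (polyA m) + (b^2+1)*b^m
              + a * Polynomial.aeval b (polyC m)) - ((m:ℂ)/((m:ℂ)+1)) • z := by abel
          _ = z + z - ((m:ℂ)/((m:ℂ)+1)) • z := by rw [hmain]
          _ = (((m:ℂ)+2)/((m:ℂ)+1)) • z := by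
              match_scalars
              field_simp
              ring
      rw [key, smul_smul]
      have hone : ((m:ℂ)+1)/((m:ℂ)+2) * (((m:ℂ)+2)/((m:ℂ)+1)) = 1 := by
        field_simp
      rw [hone, one_smul]
end

section
/- For every natural number n and every complex number x, the n-th Euler polynomial, expressed as E_n(x) = (2^{n+1}/(n+1))·( B_{n+1}(x/2 + 1/2) − B_{n+1}(x/2) ), satisfies E_n(x) = xⁿ − x^{n+1} + (−i)^{n+1}·( A_n(i·x) + C_n(i·x) ). -/
open Polynomial Finset

/-!
Put h = 2i and Sₙ(z) = hⁿ⁺¹/(n+1) · Bₙ₊₁(z/h), so that Sₙ(z + h) − Sₙ(z) = h zⁿ. The recursion is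
solved in closed form by

  Aₙ(z) = Sₙ(z + i) − Sₙ(i),    Cₙ(z) = zⁿ⁺¹ − i zⁿ − (Sₙ(z) − Sₙ(i)).

Each step of the recursion is checked by comparing the differences of both sides under z ↦ z + h,
computed from the difference equation of Sₙ and the truncated sum
∑_{k ≤ n} λₙᵏ yᵏ = Cₙ(y) − n/(n+1) · yⁿ⁺¹; a polynomial with zero difference and one root vanishes.
Finally Aₙ(ix) + Cₙ(ix) involves Sₙ only at ix + i and ix, i.e. Bₙ₊₁ at x/2 + 1/2 and x/2.
-/

namespace Polynomial

theorem eq_zero_of_periodic_of_isRoot {R : Type*} [CommRing R] [IsDomain R] [CharZero R]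
    {p : R[X]} {h a : R} (hh : h ≠ 0) (hp : Function.Periodic p.eval h) (ha : p.IsRoot a) :
    p = 0 := by
  have hroot : ∀ m : ℕ, p.IsRoot (a + m * h) := by
    intro m
    induction m with
    | zero => simpa using ha
    | succ m ih => rw [IsRoot, Nat.cast_succ, add_one_mul, ← add_assoc]; exact (hp _).trans ih
  refine eq_zero_of_infinite_isRoot p (Set.infinite_of_injective_forall_mem ?_ hroot)
  intro m₁ m₂ hm
  exact_mod_cast mul_right_cancel₀ hh (add_left_cancel hm)

theorem eq_of_eval_add_sub_eq {R : Type*} [CommRing R] [IsDomain R] [CharZero R] {p q : R[X]}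
    {h a : R} (hh : h ≠ 0)
    (hpq : ∀ z, p.eval (z + h) - p.eval z = q.eval (z + h) - q.eval z)
    (ha : p.eval a = q.eval a) : p = q := by
  refine sub_eq_zero.mp (eq_zero_of_periodic_of_isRoot hh (a := a) (fun z ↦ ?_) (by simp [ha]))
  simp only [eval_sub]
  linear_combination hpq z

theorem aeval_bernoulli_add_one {A : Type*} [CommRing A] [Algebra ℚ A] (n : ℕ) (x : A) :
    aeval (x + 1) (bernoulli n) = aeval x (bernoulli n) + n * x ^ (n - 1) := by
  simpa [aeval_comp, add_comm] using congr(aeval x $(bernoulli_comp_one_add_X n))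

end Polynomial

section ScaledBernoulli

variable {K : Type*} [Field K] [CharZero K]

noncomputable def scaledBernoulli (h : K) (m : ℕ) : K[X] :=
  C (h ^ (m + 1) / (m + 1)) *
    ((Polynomial.bernoulli (m + 1)).map (algebraMap ℚ K)).comp (C h⁻¹ * X)

theorem eval_scaledBernoulli (h z : K) (m : ℕ) :
    (scaledBernoulli h m).eval z =
      h ^ (m + 1) / (m + 1) * aeval (h⁻¹ * z) (Polynomial.bernoulli (m + 1)) := by
  simp [scaledBernoulli, eval_map_algebraMap]

theorem scaledBernoulli_eval_add {h : K} (hh : h ≠ 0) (m : ℕ) (z : K) :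
    (scaledBernoulli h m).eval (z + h) = (scaledBernoulli h m).eval z + h * z ^ m := by
  have hm : (m + 1 : K) ≠ 0 := by exact_mod_cast m.succ_ne_zero
  rw [eval_scaledBernoulli, eval_scaledBernoulli, mul_add, inv_mul_cancel₀ hh,
    aeval_bernoulli_add_one, Nat.add_sub_cancel, mul_pow, inv_pow]
  field_simp
  push_cast
  ring

theorem coeff_scaledBernoulli (h : K) (m N : ℕ) :
    (scaledBernoulli h m).coeff N = h ^ (m + 1) / (m + 1) *
      algebraMap ℚ K ((Polynomial.bernoulli (m + 1)).coeff N) * h⁻¹ ^ N := by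
  simp [scaledBernoulli, mul_assoc]

theorem natDegree_scaledBernoulli_le (h : K) (m : ℕ) : (scaledBernoulli h m).natDegree ≤ m + 1 :=
  natDegree_le_iff_coeff_eq_zero.mpr fun N hN ↦ by
    simp [coeff_scaledBernoulli, coeff_bernoulli, hN.not_ge]

theorem coeff_scaledBernoulli_self {h : K} (hh : h ≠ 0) (m : ℕ) :
    (scaledBernoulli h m).coeff (m + 1) = 1 / (m + 1) := by
  simp [coeff_scaledBernoulli, coeff_bernoulli]
  field_simp

theorem scaledBernoulli_zero {h : K} (hh : h ≠ 0) :
    scaledBernoulli h 0 = X - C (h / 2) :=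
  Polynomial.funext fun z ↦ by
    simp [eval_scaledBernoulli, Polynomial.bernoulli_one]
    field_simp

end ScaledBernoulli

open Complex (I)

local notation "𝒮" => scaledBernoulli (2 * I)

theorem two_mul_I_ne_zero : 2 * I ≠ 0 := mul_ne_zero two_ne_zero Complex.I_ne_zero

noncomputable def closedFormA (n : ℕ) : ℂ[X] := (𝒮 n).comp (X + C I) - C ((𝒮 n).eval I)

noncomputable def closedFormC (n : ℕ) : ℂ[X] :=
  X ^ (n + 1) - C I * X ^ n - (𝒮 n - C ((𝒮 n).eval I))

theorem eval_closedFormA (n : ℕ) (z : ℂ) :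
    (closedFormA n).eval z = (𝒮 n).eval (z + I) - (𝒮 n).eval I := by
  simp [closedFormA]

theorem eval_closedFormC (n : ℕ) (z : ℂ) :
    (closedFormC n).eval z = z ^ (n + 1) - I * z ^ n - ((𝒮 n).eval z - (𝒮 n).eval I) := by
  simp [closedFormC]

theorem closedFormA_eval_add (n : ℕ) (z : ℂ) :
    (closedFormA n).eval (z + 2 * I) = (closedFormA n).eval z + 2 * I * (z + I) ^ n := by
  rw [eval_closedFormA, eval_closedFormA, add_right_comm, scaledBernoulli_eval_add two_mul_I_ne_zero]
  ring

theorem closedFormC_eval_add (n : ℕ) (z : ℂ) :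
    (closedFormC n).eval (z + 2 * I) = (closedFormC n).eval z +
      ((z + 2 * I) ^ (n + 1) - I * (z + 2 * I) ^ n) - (z ^ (n + 1) - I * z ^ n) - 2 * I * z ^ n := by
  rw [eval_closedFormC, eval_closedFormC, scaledBernoulli_eval_add two_mul_I_ne_zero]
  ring

theorem closedFormC_eval_add_I (n : ℕ) (z : ℂ) :
    (closedFormC n).eval (z + I) = (z + I) ^ (n + 1) - I * (z + I) ^ n - (closedFormA n).eval z := by
  rw [eval_closedFormC, eval_closedFormA]

theorem closedFormA_eval_zero (n : ℕ) : (closedFormA n).eval 0 = 0 := by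
  simp [eval_closedFormA]

theorem closedFormC_eval_I (n : ℕ) : (closedFormC n).eval I = 0 := by
  simp [eval_closedFormC, pow_succ, mul_comm]

theorem natDegree_closedFormC_le (n : ℕ) : (closedFormC n).natDegree ≤ n + 1 :=
  natDegree_le_iff_coeff_eq_zero.mpr fun N hN ↦ by
    have hS := natDegree_le_iff_coeff_eq_zero.mp (natDegree_scaledBernoulli_le (2 * I) n) N hN
    simp [closedFormC, coeff_X_pow, coeff_C, hS, hN.ne', (Nat.lt_of_succ_lt hN).ne',
      (Nat.zero_lt_of_lt hN).ne']

theorem coeff_closedFormC_succ (n : ℕ) : (closedFormC n).coeff (n + 1) = n / (n + 1) := by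
  simp [closedFormC, coeff_X_pow, coeff_scaledBernoulli_self two_mul_I_ne_zero]
  field_simp
  ring

theorem sum_coeff_closedFormC_mul_pow (n : ℕ) (y : ℂ) :
    ∑ k ∈ range (n + 1), (closedFormC n).coeff k * y ^ k =
      (closedFormC n).eval y - n / (n + 1) * y ^ (n + 1) := by
  rw [eval_eq_sum_range' (Nat.lt_succ_of_le (natDegree_closedFormC_le n)), sum_range_succ _ (n + 1),
    coeff_closedFormC_succ]
  ring

theorem closedFormA_succ (n : ℕ) :
    ((n + 1 : ℂ) / (n + 2)) • (X * closedFormA n +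
      ∑ k ∈ range (n + 1), (closedFormC n).coeff k • closedFormA k) = closedFormA (n + 1) := by
  refine eq_of_eval_add_sub_eq two_mul_I_ne_zero (a := 0) (fun z ↦ ?_) ?_
  · have hsum : ∑ k ∈ range (n + 1), (closedFormC n).coeff k * (closedFormA k).eval (z + 2 * I) =
        ∑ k ∈ range (n + 1), (closedFormC n).coeff k * (closedFormA k).eval z +
          2 * I * ((closedFormC n).eval (z + I) - n / (n + 1) * (z + I) ^ (n + 1)) := by
      rw [← sum_coeff_closedFormC_mul_pow, mul_sum, ← sum_add_distrib]
      exact sum_congr rfl fun k _ ↦ by rw [closedFormA_eval_add]; ring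
    simp only [eval_smul, eval_add, eval_mul, eval_X, eval_finsetSum, smul_eq_mul]
    rw [hsum, closedFormA_eval_add, closedFormA_eval_add, closedFormC_eval_add_I]
    have hn : (n + 2 : ℂ) ≠ 0 := by exact_mod_cast (n + 1).succ_ne_zero
    field_simp
    ring
  · simp [eval_finsetSum, closedFormA_eval_zero]

theorem closedFormC_succ (n : ℕ) :
    ((n + 1 : ℂ) / (n + 2)) • ((X ^ 2 + 1) * X ^ n +
      ∑ k ∈ range (n + 1), (closedFormC n).coeff k • closedFormC k) = closedFormC (n + 1) := by
  refine eq_of_eval_add_sub_eq two_mul_I_ne_zero (a := I) (fun z ↦ ?_) ?_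
  · have hsum : ∑ k ∈ range (n + 1), (closedFormC n).coeff k * (closedFormC k).eval (z + 2 * I) =
        ∑ k ∈ range (n + 1), (closedFormC n).coeff k * (closedFormC k).eval z +
          (z + I) * ((closedFormC n).eval (z + 2 * I) - n / (n + 1) * (z + 2 * I) ^ (n + 1)) -
          (z + I) * ((closedFormC n).eval z - n / (n + 1) * z ^ (n + 1)) := by
      simp only [← sum_coeff_closedFormC_mul_pow, mul_sum, ← sum_add_distrib, ← sum_sub_distrib]
      exact sum_congr rfl fun k _ ↦ by rw [closedFormC_eval_add]; ring
    simp only [eval_smul, eval_add, eval_mul, eval_pow, eval_X, eval_one, eval_finsetSum,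
      smul_eq_mul]
    rw [hsum, closedFormC_eval_add, closedFormC_eval_add]
    have hn : (n + 2 : ℂ) ≠ 0 := by exact_mod_cast (n + 1).succ_ne_zero
    field_simp
    linear_combination (n + 1) * ((z + 2 * I) ^ n - z ^ n) * Complex.I_sq
  · simp [eval_finsetSum, closedFormC_eval_I, Complex.I_sq]

theorem closedFormA_zero : closedFormA 0 = X := by
  simp [closedFormA, scaledBernoulli_zero two_mul_I_ne_zero]

theorem closedFormC_zero : closedFormC 0 = 0 := by
  simp [closedFormC, scaledBernoulli_zero two_mul_I_ne_zero]

theorem AC_eq_closedForm (n : ℕ) : AC n = (closedFormA n, closedFormC n) := by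
  induction n using Nat.strong_induction_on with
  | _ n ih =>
    cases n with
    | zero => rw [AC, closedFormA_zero, closedFormC_zero]
    | succ n =>
      rw [AC, ← closedFormA_succ, ← closedFormC_succ, ih n n.lt_succ_self, Prod.mk.injEq]
      constructor <;> congr 2 <;>
        exact (sum_congr rfl fun k _ ↦ by rw [ih k (mem_range.mp k.2)]).trans (sum_attach _ _)

theorem stmt7 (n : ℕ) (x : ℂ) :
    ((2 : ℂ) ^ (n + 1) / (n + 1)) *
        (Polynomial.aeval (x / 2 + 1 / 2) (Polynomial.bernoulli (n + 1)) -
          Polynomial.aeval (x / 2) (Polynomial.bernoulli (n + 1))) =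
      x ^ n - x ^ (n + 1) +
        (-Complex.I) ^ (n + 1) *
          ((polyA n).eval (Complex.I * x) + (polyC n).eval (Complex.I * x)) := by
  have hshift : (2 * I)⁻¹ * (I * x + I) = x / 2 + 1 / 2 := by field_simp
  have hscale : (2 * I)⁻¹ * (I * x) = x / 2 := by field_simp
  have hI : (-I) ^ (n + 1) * I ^ (n + 1) = 1 := by rw [← mul_pow]; simp
  rw [polyA, polyC, AC_eq_closedForm, eval_closedFormA, eval_closedFormC,
    eval_scaledBernoulli _ (I * x + I), eval_scaledBernoulli _ (I * x), hshift, hscale]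
  linear_combination (x ^ n - x ^ (n + 1) - 2 ^ (n + 1) / (n + 1) *
    (aeval (x / 2 + 1 / 2) (Polynomial.bernoulli (n + 1)) -
      aeval (x / 2) (Polynomial.bernoulli (n + 1)))) * hI
end

section
/- For every natural number n ≥ 1, 4·∫_{0}^{1} (ln x)^{2n−1}/(x² − 1) dx = ((4ⁿ − 1)·(−1)^{n−1}·β_{2n}/n)·π^{2n}, where the integral is taken over the open interval (0,1). -/
/-!
Substituting `x = e^{-t}` turns the integral into `∫₀^∞ t^{2n-1} / (2 sinh t) dt`. Expanding
`1 / (2 sinh t) = ∑ₖ e^{-(2k+1)t}` and integrating termwise (the Gamma integral) gives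
`(2n-1)! ∑ₖ (2k+1)^{-2n}`, and the odd part of `ζ(2n)` is `(1 - 4^{-n}) ζ(2n)`, which Euler's
formula expresses through `β_{2n}`.
-/

open MeasureTheory Real Set Nat

theorem integral_Ioo_zero_one_eq_integral_Ioi_exp_neg {E : Type*} [NormedAddCommGroup E]
    [NormedSpace ℝ E] (g : ℝ → E) :
    ∫ x in Ioo (0 : ℝ) 1, g x = ∫ t in Ioi (0 : ℝ), exp (-t) • g (exp (-t)) := by
  have himage : (fun t ↦ exp (-t)) '' Ioi 0 = Ioo 0 1 := by
    ext y
    constructor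
    · rintro ⟨t, ht, rfl⟩
      exact ⟨exp_pos _, exp_lt_one_iff.mpr (neg_lt_zero.mpr ht)⟩
    · rintro ⟨hy0, hy1⟩
      exact ⟨-log y, neg_pos.mpr (log_neg hy0 hy1), by simp [exp_log hy0]⟩
  have hderiv (t : ℝ) (_ : t ∈ Ioi (0 : ℝ)) :
      HasDerivWithinAt (fun t ↦ exp (-t)) (-exp (-t)) (Ioi 0) t := by
    simpa using ((hasDerivAt_neg t).exp).hasDerivWithinAt
  have hinj : InjOn (fun t ↦ exp (-t)) (Ioi 0) := fun a _ b _ h ↦ by simpa using h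
  rw [← himage, integral_image_eq_integral_abs_deriv_smul measurableSet_Ioi hderiv hinj g]
  simp only [abs_neg, abs_of_pos (exp_pos _)]

theorem exp_neg_mul_log_exp_neg_pow_div {p : ℕ} (hp : Odd p) {t : ℝ} (ht : 0 < t) :
    exp (-t) * (log (exp (-t)) ^ p / (exp (-t) ^ 2 - 1)) = t ^ p / (2 * sinh t) := by
  have h : 1 < exp t ^ 2 := one_lt_pow₀ (one_lt_exp_iff.mpr ht) two_ne_zero
  have h₁ : exp t ^ 2 - 1 ≠ 0 := by linarith
  have h₂ : 1 - exp t ^ 2 ≠ 0 := by linarith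
  rw [log_exp, hp.neg_pow, sinh_eq, exp_neg]
  field_simp
  ring

theorem hasSum_exp_neg_odd_mul {t : ℝ} (ht : 0 < t) :
    HasSum (fun k : ℕ ↦ exp (-((2 * k + 1) * t))) (1 / (2 * sinh t)) := by
  have hq : exp (-(2 * t)) < 1 := exp_lt_one_iff.mpr (by linarith)
  have hsum := ((hasSum_geometric_of_lt_one (exp_pos _).le hq).mul_left (exp (-t))).congr_fun
    fun k : ℕ ↦ show exp (-((2 * k + 1) * t)) = _ by rw [← exp_nat_mul, ← exp_add]; ring_nf
  have hval : exp (-t) * (1 - exp (-(2 * t)))⁻¹ = 1 / (2 * sinh t) := by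
    have hsq : exp (-(2 * t)) = exp (-t) * exp (-t) := by rw [← exp_add]; ring_nf
    rw [sinh_eq, hsq, exp_neg t]
    field_simp
  rwa [hval] at hsum

theorem integral_pow_mul_exp_neg_mul (p : ℕ) {r : ℝ} (hr : 0 < r) :
    ∫ t in Ioi (0 : ℝ), t ^ p * exp (-(r * t)) = p ! / r ^ (p + 1) := by
  have h := integral_rpow_mul_exp_neg_mul_Ioi (a := (p : ℝ) + 1) (by positivity) hr
  simp only [add_sub_cancel_right, rpow_natCast, Gamma_nat_eq_factorial] at h
  rw [← Nat.cast_add_one, rpow_natCast] at h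
  rw [h, div_pow, one_pow, one_div_mul_eq_div]

theorem integrableOn_pow_mul_exp_neg_mul (p : ℕ) {r : ℝ} (hr : 0 < r) :
    IntegrableOn (fun t ↦ t ^ p * exp (-(r * t))) (Ioi 0) := by
  simpa [rpow_natCast] using integrableOn_rpow_mul_exp_neg_mul_rpow (p := 1) (s := p)
    (by linarith [p.cast_nonneg (α := ℝ)]) one_pos hr

theorem hasSum_one_div_odd_pow {k : ℕ} {Z : ℝ} (h : HasSum (fun m : ℕ ↦ 1 / (m : ℝ) ^ k) Z) :
    HasSum (fun m : ℕ ↦ 1 / (2 * m + 1 : ℝ) ^ k) ((1 - (2 ^ k)⁻¹) * Z) := by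
  have heven : HasSum (fun m : ℕ ↦ 1 / ((2 * m : ℕ) : ℝ) ^ k) ((2 ^ k)⁻¹ * Z) :=
    (h.mul_left _).congr_fun fun m ↦ by push_cast; rw [mul_pow, one_div, one_div, mul_inv]
  have hinj : Function.Injective fun m : ℕ ↦ 2 * m + 1 := fun a b hab ↦ by simp only at hab; omega
  obtain ⟨O, hodd⟩ := h.summable.comp_injective hinj
  have hO : O = (1 - (2 ^ k)⁻¹) * Z := by
    linarith [(HasSum.even_add_odd (f := fun m : ℕ ↦ 1 / (m : ℝ) ^ k) heven hodd).unique h]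
  subst hO
  exact hodd.congr_fun fun m ↦ by simp

theorem hasSum_integral_pow_div_two_sinh {p : ℕ} (hp : p ≠ 0) :
    HasSum (fun k : ℕ ↦ p ! / (2 * k + 1 : ℝ) ^ (p + 1))
      (∫ t in Ioi (0 : ℝ), t ^ p / (2 * sinh t)) := by
  set F : ℕ → ℝ → ℝ := fun k t ↦ t ^ p * exp (-((2 * k + 1) * t))
  have hF_int (k : ℕ) : ∫ t in Ioi (0 : ℝ), F k t = p ! / (2 * k + 1 : ℝ) ^ (p + 1) :=
    integral_pow_mul_exp_neg_mul p (by positivity)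
  have hF_norm (k : ℕ) : ∫ t in Ioi (0 : ℝ), ‖F k t‖ = ∫ t in Ioi (0 : ℝ), F k t :=
    setIntegral_congr_fun measurableSet_Ioi fun t ht ↦
      norm_of_nonneg (mul_nonneg (pow_nonneg (le_of_lt ht) _) (exp_pos _).le)
  have hsummable : Summable fun k : ℕ ↦ p ! / (2 * k + 1 : ℝ) ^ (p + 1) := by
    have hodd := hasSum_one_div_odd_pow (summable_one_div_nat_pow.mpr (by omega : 1 < p + 1)).hasSum
    simpa only [mul_one_div] using hodd.summable.mul_left (p ! : ℝ)
  have hsum := hasSum_integral_of_summable_integral_norm (F := F) (μ := volume.restrict (Ioi 0))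
    (fun k ↦ integrableOn_pow_mul_exp_neg_mul p (by positivity : (0 : ℝ) < 2 * k + 1))
    (by simpa only [hF_norm, hF_int] using hsummable)
  simp only [hF_int] at hsum
  have hseries : ∫ t in Ioi (0 : ℝ), t ^ p / (2 * sinh t) = ∫ t in Ioi (0 : ℝ), ∑' k, F k t :=
    setIntegral_congr_fun measurableSet_Ioi fun t ht ↦ by
      rw [← mul_one_div, ← ((hasSum_exp_neg_odd_mul ht).mul_left (t ^ p)).tsum_eq]
  rwa [hseries]

theorem stmt12 (n : ℕ) (hn : 1 ≤ n) :
    4 * ∫ x in Set.Ioo (0 : ℝ) 1, (Real.log x) ^ (2 * n - 1) / (x ^ 2 - 1) =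
      ((4 ^ n - 1) * (-1 : ℝ) ^ (n - 1) * ((bernoulli (2 * n) : ℚ) : ℝ) / n) *
        Real.pi ^ (2 * n) := by
  have hodd : Odd (2 * n - 1) := ⟨n - 1, by omega⟩
  have hsubst : ∫ x in Ioo (0 : ℝ) 1, log x ^ (2 * n - 1) / (x ^ 2 - 1) =
      ∫ t in Ioi (0 : ℝ), t ^ (2 * n - 1) / (2 * sinh t) := by
    rw [integral_Ioo_zero_one_eq_integral_Ioi_exp_neg]
    exact setIntegral_congr_fun measurableSet_Ioi fun t ht ↦
      exp_neg_mul_log_exp_neg_pow_div hodd ht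
  have hseries := hasSum_integral_pow_div_two_sinh (p := 2 * n - 1) (by omega)
  rw [Nat.sub_add_cancel (by omega)] at hseries
  have hzeta := (hasSum_one_div_odd_pow (hasSum_zeta_nat (k := n) (by omega))).mul_left
    ((2 * n - 1) ! : ℝ)
  simp only [mul_one_div] at hzeta
  rw [hsubst, hseries.unique hzeta]
  obtain ⟨m, rfl⟩ : ∃ m, n = m + 1 := ⟨n - 1, by omega⟩
  rw [show 2 * (m + 1) = (2 * m + 1) + 1 by ring, Nat.factorial_succ]
  simp only [add_tsub_cancel_right, pow_succ, pow_mul]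
  push_cast
  field_simp
  ring
end

section
/- For every real number a > 0 and every x in the open interval (0,1), ∫_{0}^{1} ( 1/(t + a) − 1/(x + a) )/(t − x) dt = ln(a/(1+a)) · 1/(x + a), where the integral is taken over the open interval (0,1). In other words, the function x ↦ 1/(x+a) is an eigenvector of the finite Hilbert-type transform T, defined by T(f)(x) = ∫_{0}^{1} (f(t) − f(x))/(t − x) dt, with eigenvalue γ_a = ln(a/(1+a)). -/
open MeasureTheory Real

theorem stmt14 (a : ℝ) (ha : 0 < a) (x : ℝ) (hx : x ∈ Set.Ioo (0 : ℝ) 1) :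
    ∫ t in Set.Ioo (0 : ℝ) 1, (1 / (t + a) - 1 / (x + a)) / (t - x) =
      Real.log (a / (1 + a)) * (1 / (x + a)) := by
  obtain ⟨hx0, hx1⟩ := hx
  have hxa : 0 < x + a := by linarith
  have hne : ∀ᵐ t : ℝ ∂(volume.restrict (Set.Ioo (0:ℝ) 1)), t ≠ x := by
    refine (ae_restrict_of_ae ?_)
    have : volume ({x} : Set ℝ) = 0 := volume_singleton
    simp [ae_iff, this]
  have hrw : ∀ᵐ t : ℝ ∂(volume.restrict (Set.Ioo (0:ℝ) 1)),
      (1 / (t + a) - 1 / (x + a)) / (t - x) = -(1/(x+a)) * (1/(t+a)) := by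
    filter_upwards [hne, ae_restrict_mem measurableSet_Ioo] with t ht htm
    have hta : 0 < t + a := by linarith [htm.1]
    have htx : t - x ≠ 0 := sub_ne_zero.2 ht
    field_simp
    ring
  rw [integral_congr_ae hrw, integral_const_mul]
  have h1 : ∫ t in Set.Ioo (0:ℝ) 1, 1/(t+a) = Real.log ((1+a)/a) := by
    rw [← integral_Ioc_eq_integral_Ioo, ← intervalIntegral.integral_of_le zero_le_one]
    have := intervalIntegral.integral_comp_add_right (a := (0:ℝ)) (b := 1)
      (fun u => 1/u) a
    rw [this, zero_add, integral_one_div]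
    intro h
    rw [Set.uIcc_of_le (by linarith), Set.mem_Icc] at h
    linarith [h.1]
  rw [h1, Real.log_div (by linarith) (by linarith), Real.log_div (by linarith) (by linarith)]
  ring
end
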